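/- Let p be an odd prime. Consider the action of GL(2,p) on (Z/p)^4 = ⟨χ, z1^2, z2^2, z1z2⟩ where M = [[a,b],[c,d]] acts by χ ↦ det(M)^2 χ, z1^2 ↦ a^2 z1^2 + 2ac z1z2 + c^2 z2^2, z2^2 ↦ b^2 z1^2 + 2bd z1z2 + d^2 z2^2, z1z2 ↦ ab z1^2 + (ad+bc) z1z2 + cd z2^2. This action has exactly 2p + 9 orbits. -/

import Mathlib

/-- The action of `M = [[a,b],[c,d]] ∈ GL(2,p)` on
`H⁴(H_p, Z) ≅ (Z/p)⁴ = ⟨χ, z₁², z₂², z₁z₂⟩`, recorded as `(x, α, β, γ)` (the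
coefficients of `χ, z₁², z₂², z₁z₂`): `χ ↦ det(M)² χ`,
`z₁² ↦ a² z₁² + 2ac z₁z₂ + c² z₂²`, `z₂² ↦ b² z₁² + 2bd z₁z₂ + d² z₂²`,
`z₁z₂ ↦ ab z₁² + (ad+bc) z₁z₂ + cd z₂²`, extended linearly. -/
def H4HeisAct (p : ℕ) (M : Matrix.GeneralLinearGroup (Fin 2) (ZMod p))
    (m : ZMod p × ZMod p × ZMod p × ZMod p) : ZMod p × ZMod p × ZMod p × ZMod p :=
  let a := (M : Matrix (Fin 2) (Fin 2) (ZMod p)) 0 0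
  let b := (M : Matrix (Fin 2) (Fin 2) (ZMod p)) 0 1
  let c := (M : Matrix (Fin 2) (Fin 2) (ZMod p)) 1 0
  let d := (M : Matrix (Fin 2) (Fin 2) (ZMod p)) 1 1
  ( ((M : Matrix (Fin 2) (Fin 2) (ZMod p)).det) ^ 2 * m.1,
    a ^ 2 * m.2.1 + b ^ 2 * m.2.2.1 + a * b * m.2.2.2,
    c ^ 2 * m.2.1 + d ^ 2 * m.2.2.1 + c * d * m.2.2.2,
    2 * a * c * m.2.1 + 2 * b * d * m.2.2.1 + (a * d + b * c) * m.2.2.2 )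

namespace H4Aux
variable {p : ℕ}

lemma act_def (M : Matrix.GeneralLinearGroup (Fin 2) (ZMod p))
    (m : ZMod p × ZMod p × ZMod p × ZMod p) :
    H4HeisAct p M m =
    ( ((M : Matrix (Fin 2) (Fin 2) (ZMod p)).det) ^ 2 * m.1,
      (M : Matrix (Fin 2) (Fin 2) (ZMod p)) 0 0 ^ 2 * m.2.1
        + (M : Matrix (Fin 2) (Fin 2) (ZMod p)) 0 1 ^ 2 * m.2.2.1
        + (M : Matrix (Fin 2) (Fin 2) (ZMod p)) 0 0 * (M : Matrix (Fin 2) (Fin 2) (ZMod p)) 0 1 * m.2.2.2,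
      (M : Matrix (Fin 2) (Fin 2) (ZMod p)) 1 0 ^ 2 * m.2.1
        + (M : Matrix (Fin 2) (Fin 2) (ZMod p)) 1 1 ^ 2 * m.2.2.1
        + (M : Matrix (Fin 2) (Fin 2) (ZMod p)) 1 0 * (M : Matrix (Fin 2) (Fin 2) (ZMod p)) 1 1 * m.2.2.2,
      2 * (M : Matrix (Fin 2) (Fin 2) (ZMod p)) 0 0 * (M : Matrix (Fin 2) (Fin 2) (ZMod p)) 1 0 * m.2.1
        + 2 * (M : Matrix (Fin 2) (Fin 2) (ZMod p)) 0 1 * (M : Matrix (Fin 2) (Fin 2) (ZMod p)) 1 1 * m.2.2.1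
        + ((M : Matrix (Fin 2) (Fin 2) (ZMod p)) 0 0 * (M : Matrix (Fin 2) (Fin 2) (ZMod p)) 1 1
            + (M : Matrix (Fin 2) (Fin 2) (ZMod p)) 0 1 * (M : Matrix (Fin 2) (Fin 2) (ZMod p)) 1 0) * m.2.2.2 ) := rfl

lemma act_one (m : ZMod p × ZMod p × ZMod p × ZMod p) : H4HeisAct p 1 m = m := by
  obtain ⟨x, α, β, γ⟩ := m
  rw [act_def]
  have h1 : ((1 : Matrix.GeneralLinearGroup (Fin 2) (ZMod p)) : Matrix (Fin 2) (Fin 2) (ZMod p)) = 1 := rfl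
  rw [h1, Matrix.det_one]
  simp only [Prod.mk.injEq, Matrix.one_apply_eq, Matrix.one_apply_ne (by decide : (0:Fin 2) ≠ 1),
    Matrix.one_apply_ne (by decide : (1:Fin 2) ≠ 0)]
  refine ⟨by ring, by ring, by ring, by ring⟩

lemma act_act (M N : Matrix.GeneralLinearGroup (Fin 2) (ZMod p))
    (m : ZMod p × ZMod p × ZMod p × ZMod p) :
    H4HeisAct p N (H4HeisAct p M m) = H4HeisAct p (N * M) m := by
  obtain ⟨x, α, β, γ⟩ := m
  rw [act_def, act_def, act_def]
  have hv : ((N * M : Matrix.GeneralLinearGroup (Fin 2) (ZMod p)) : Matrix (Fin 2) (Fin 2) (ZMod p))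
      = (N : Matrix (Fin 2) (Fin 2) (ZMod p)) * (M : Matrix (Fin 2) (Fin 2) (ZMod p)) := rfl
  rw [hv, Matrix.det_mul]
  simp only [Matrix.mul_apply, Fin.sum_univ_two, Matrix.det_fin_two, Prod.mk.injEq]
  refine ⟨by ring, by ring, by ring, by ring⟩

lemma det_ne [Fact p.Prime] (M : Matrix.GeneralLinearGroup (Fin 2) (ZMod p)) :
    ((M : Matrix (Fin 2) (Fin 2) (ZMod p))).det ≠ 0 := by
  intro h
  have h1 : ((M : Matrix (Fin 2) (Fin 2) (ZMod p)) * ((M⁻¹ : Matrix.GeneralLinearGroup (Fin 2) (ZMod p)) : Matrix (Fin 2) (Fin 2) (ZMod p))).det = 1 := by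
    rw [← Units.val_mul, mul_inv_cancel]
    simp
  rw [Matrix.det_mul, h, zero_mul] at h1
  exact zero_ne_one h1

def glmk [Fact p.Prime] (a b c d : ZMod p) (h : a * d - b * c ≠ 0) :
    Matrix.GeneralLinearGroup (Fin 2) (ZMod p) :=
  Matrix.GeneralLinearGroup.mkOfDetNeZero !![a, b; c, d] (by rwa [Matrix.det_fin_two_of])

lemma glmk_act [Fact p.Prime] (a b c d : ZMod p) (h : a * d - b * c ≠ 0)
    (m : ZMod p × ZMod p × ZMod p × ZMod p) :
    H4HeisAct p (glmk a b c d h) m =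
    ( (a * d - b * c) ^ 2 * m.1,
      a ^ 2 * m.2.1 + b ^ 2 * m.2.2.1 + a * b * m.2.2.2,
      c ^ 2 * m.2.1 + d ^ 2 * m.2.2.1 + c * d * m.2.2.2,
      2 * a * c * m.2.1 + 2 * b * d * m.2.2.1 + (a * d + b * c) * m.2.2.2 ) := by
  have hval : ((glmk a b c d h : Matrix.GeneralLinearGroup (Fin 2) (ZMod p)) : Matrix (Fin 2) (Fin 2) (ZMod p)) = !![a, b; c, d] := rfl
  rw [act_def, hval, Matrix.det_fin_two_of]
  simp


variable {p : ℕ}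

def hdisc (m : ZMod p × ZMod p × ZMod p × ZMod p) : ZMod p :=
  m.2.2.2 ^ 2 - 4 * m.2.1 * m.2.2.1

open scoped Classical in
noncomputable def hlam (m : ZMod p × ZMod p × ZMod p × ZMod p) : ZMod p :=
  if m.2.1 ≠ 0 then m.2.1 else m.2.2.1

open scoped Classical in
noncomputable def hcls (ν : ZMod p) (x : ZMod p) : ZMod p :=
  if x = 0 then 0 else if IsSquare x then 1 else ν

variable [Fact p.Prime]

open scoped Classical in
noncomputable def hcf (ν : ZMod p) (m : ZMod p × ZMod p × ZMod p × ZMod p) :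
    ZMod p × ZMod p × ZMod p × ZMod p :=
  if m.2 = (0, 0, 0) then (hcls ν m.1, 0, 0, 0)
  else if hdisc m = 0 then (hcls ν m.1, hcls ν (hlam m), 0, 0)
  else if IsSquare (hdisc m) then (m.1 / hdisc m, 0, 0, 1)
  else (4 * ν * m.1 / hdisc m, 1, -ν, 0)

lemma nsq_ne_zero {x : ZMod p} (hx : ¬IsSquare x) : x ≠ 0 := fun h => hx (h ▸ ⟨0, by ring⟩)

lemma nsq_mul {x y : ZMod p} (hx : ¬IsSquare x) (hy : ¬IsSquare y) : IsSquare (x * y) := by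
  have h1 : quadraticChar (ZMod p) x = -1 := quadraticChar_neg_one_iff_not_isSquare.mpr hx
  have h2 : quadraticChar (ZMod p) y = -1 := quadraticChar_neg_one_iff_not_isSquare.mpr hy
  have h3 : quadraticChar (ZMod p) (x * y) = 1 := by rw [map_mul, h1, h2]; ring
  exact (quadraticChar_one_iff_isSquare (mul_ne_zero (nsq_ne_zero hx) (nsq_ne_zero hy))).mp h3

lemma isSquare_sq_mul {t : ZMod p} (ht : t ≠ 0) (x : ZMod p) :
    IsSquare (t ^ 2 * x) ↔ IsSquare x := by
  constructor
  · rintro ⟨r, hr⟩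
    exact ⟨r / t, by field_simp; linear_combination hr⟩
  · rintro ⟨r, hr⟩
    exact ⟨t * r, by rw [hr]; ring⟩

lemma cls_sq_mul {ν : ZMod p} {t : ZMod p} (ht : t ≠ 0) (x : ZMod p) :
    hcls ν (t ^ 2 * x) = hcls ν x := by
  unfold hcls
  by_cases h0 : x = 0
  · simp [h0]
  · rw [if_neg h0, if_neg (by simp [pow_ne_zero, ht, h0] : ¬(t ^ 2 * x = 0))]
    by_cases hs : IsSquare x
    · rw [if_pos hs, if_pos ((isSquare_sq_mul ht x).mpr hs)]
    · rw [if_neg hs, if_neg (fun h => hs ((isSquare_sq_mul ht x).mp h))]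

lemma cls_spec {ν : ZMod p} (hν : ¬IsSquare ν) (x : ZMod p) :
    ∃ t : ZMod p, t ≠ 0 ∧ x = t ^ 2 * hcls ν x := by
  have hν0 : ν ≠ 0 := nsq_ne_zero hν
  by_cases h0 : x = 0
  · exact ⟨1, one_ne_zero, by simp [hcls, h0]⟩
  by_cases hs : IsSquare x
  · obtain ⟨r, hr⟩ := hs
    have hr0 : r ≠ 0 := by rintro rfl; rw [mul_zero] at hr; exact h0 hr
    refine ⟨r, hr0, ?_⟩
    unfold hcls
    rw [if_neg h0, if_pos ⟨r, hr⟩, hr]; ring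
  · obtain ⟨r, hr⟩ := nsq_mul hs hν
    have hr0 : r ≠ 0 := by
      rintro rfl; rw [mul_zero] at hr
      rcases mul_eq_zero.mp hr with h | h
      exacts [h0 h, hν0 h]
    refine ⟨r * ν⁻¹, mul_ne_zero hr0 (inv_ne_zero hν0), ?_⟩
    unfold hcls
    rw [if_neg h0, if_neg hs]
    field_simp
    linear_combination hr

lemma cls_zero (ν : ZMod p) : hcls ν 0 = 0 := by simp [hcls]

lemma cls_one (ν : ZMod p) : hcls ν 1 = 1 := by
  unfold hcls; rw [if_neg one_ne_zero, if_pos IsSquare.one]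

lemma cls_nu {ν : ZMod p} (hν : ¬IsSquare ν) : hcls ν ν = ν := by
  unfold hcls; rw [if_neg (nsq_ne_zero hν), if_neg hν]

lemma cls_mem (ν x : ZMod p) : hcls ν x = 0 ∨ hcls ν x = 1 ∨ hcls ν x = ν := by
  unfold hcls
  by_cases h0 : x = 0
  · simp [h0]
  · rw [if_neg h0]; by_cases hs : IsSquare x <;> simp [hs]


lemma hdisc_act (M : Matrix.GeneralLinearGroup (Fin 2) (ZMod p))
    (m : ZMod p × ZMod p × ZMod p × ZMod p) :
    hdisc (H4HeisAct p M m) = ((M : Matrix (Fin 2) (Fin 2) (ZMod p)).det) ^ 2 * hdisc m := by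
  obtain ⟨x, α, β, γ⟩ := m
  rw [act_def]
  unfold hdisc
  simp only [Matrix.det_fin_two]
  ring

lemma qzero_act (M : Matrix.GeneralLinearGroup (Fin 2) (ZMod p))
    (m : ZMod p × ZMod p × ZMod p × ZMod p) (h : m.2 = (0, 0, 0)) :
    (H4HeisAct p M m).2 = ((0 : ZMod p), (0 : ZMod p), (0 : ZMod p)) := by
  rw [act_def]
  simp [h]

lemma act_fst (M : Matrix.GeneralLinearGroup (Fin 2) (ZMod p))
    (m : ZMod p × ZMod p × ZMod p × ZMod p) :
    (H4HeisAct p M m).1 = ((M : Matrix (Fin 2) (Fin 2) (ZMod p)).det) ^ 2 * m.1 := rfl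


lemma rank1_rep (h2 : (2 : ZMod p) ≠ 0) (m : ZMod p × ZMod p × ZMod p × ZMod p)
    (h0 : m.2 ≠ (0, 0, 0)) (hd : hdisc m = 0) :
    ∃ lam u v : ZMod p, lam ≠ 0 ∧ (u ≠ 0 ∨ v ≠ 0) ∧
      m = (m.1, lam * u ^ 2, lam * v ^ 2, 2 * lam * u * v) ∧ hlam m = lam := by
  obtain ⟨x, α, β, γ⟩ := m
  unfold hdisc at hd
  simp only at hd ⊢
  by_cases hα : α = 0
  · have hγ : γ = 0 := by
      have : γ ^ 2 = 0 := by rw [hα] at hd; linear_combination hd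
      exact pow_eq_zero_iff (n := 2) (by norm_num) |>.mp this
    have hβ : β ≠ 0 := by
      intro hβ; exact h0 (by simp [hα, hβ, hγ])
    refine ⟨β, 0, 1, hβ, Or.inr one_ne_zero, ?_, ?_⟩
    · simp only [Prod.mk.injEq]
      exact ⟨trivial, by rw [hα]; ring, by ring, by rw [hγ]; ring⟩
    · unfold hlam; simp [hα]
  · refine ⟨α, 1, γ / (2 * α), hα, Or.inl one_ne_zero, ?_, ?_⟩
    · simp only [Prod.mk.injEq]
      refine ⟨trivial, by ring, ?_, ?_⟩
      · field_simp
        linear_combination -hd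
      · field_simp
    · unfold hlam; simp [hα]

lemma cls_lam_act {ν : ZMod p} (M : Matrix.GeneralLinearGroup (Fin 2) (ZMod p))
    (x lam u v : ZMod p) (hl : lam ≠ 0) (huv : u ≠ 0 ∨ v ≠ 0) :
    hcls ν (hlam (H4HeisAct p M (x, lam * u ^ 2, lam * v ^ 2, 2 * lam * u * v)))
      = hcls ν lam := by
  set a := (M : Matrix (Fin 2) (Fin 2) (ZMod p)) 0 0 with ha
  set b := (M : Matrix (Fin 2) (Fin 2) (ZMod p)) 0 1 with hb
  set c := (M : Matrix (Fin 2) (Fin 2) (ZMod p)) 1 0 with hc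
  set d := (M : Matrix (Fin 2) (Fin 2) (ZMod p)) 1 1 with hdd
  have he : (M : Matrix (Fin 2) (Fin 2) (ZMod p)).det ≠ 0 := det_ne M
  rw [Matrix.det_fin_two, ← ha, ← hb, ← hc, ← hdd] at he
  rw [act_def]
  unfold hlam
  simp only [← ha, ← hb, ← hc, ← hdd]
  have hα' : a ^ 2 * (lam * u ^ 2) + b ^ 2 * (lam * v ^ 2) + a * b * (2 * lam * u * v)
      = lam * (a * u + b * v) ^ 2 := by ring
  have hβ' : c ^ 2 * (lam * u ^ 2) + d ^ 2 * (lam * v ^ 2) + c * d * (2 * lam * u * v)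
      = lam * (c * u + d * v) ^ 2 := by ring
  rw [hα', hβ']
  set U := a * u + b * v with hU
  set V := c * u + d * v with hV
  by_cases hU0 : U = 0
  · have hV0 : V ≠ 0 := by
      intro hV0
      have hu : u = 0 := by
        have h1 : (a * d - b * c) * u = 0 := by
          rw [show (0 : ZMod p) = d * U - b * V by rw [hU0, hV0]; ring, hU, hV]; ring
        exact (mul_eq_zero.mp h1).resolve_left he
      have hv : v = 0 := by
        have h1 : (a * d - b * c) * v = 0 := by
          rw [show (0 : ZMod p) = a * V - c * U by rw [hU0, hV0]; ring, hU, hV]; ring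
        exact (mul_eq_zero.mp h1).resolve_left he
      rcases huv with h | h
      exacts [h hu, h hv]
    rw [if_neg (by simp [hU0])]
    rw [show lam * V ^ 2 = V ^ 2 * lam by ring, cls_sq_mul hV0]
  · rw [if_pos (by simp [mul_ne_zero hl (pow_ne_zero 2 hU0)])]
    rw [show lam * U ^ 2 = U ^ 2 * lam by ring, cls_sq_mul hU0]

lemma cf_act {ν : ZMod p} (h2 : (2 : ZMod p) ≠ 0)
    (M : Matrix.GeneralLinearGroup (Fin 2) (ZMod p))
    (m : ZMod p × ZMod p × ZMod p × ZMod p) :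
    hcf ν (H4HeisAct p M m) = hcf ν m := by
  have he : (M : Matrix (Fin 2) (Fin 2) (ZMod p)).det ≠ 0 := det_ne M
  by_cases h0 : m.2 = (0, 0, 0)
  · have h0' := qzero_act M m h0
    unfold hcf
    rw [if_pos h0, if_pos h0', act_fst, cls_sq_mul he]
  · have h0' : (H4HeisAct p M m).2 ≠ ((0 : ZMod p), (0 : ZMod p), (0 : ZMod p)) := by
      intro h
      apply h0
      have h3 := qzero_act M⁻¹ (H4HeisAct p M m) h
      rwa [act_act, inv_mul_cancel, act_one] at h3
    unfold hcf
    rw [if_neg h0, if_neg h0']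
    by_cases hd : hdisc m = 0
    · rw [if_pos hd, if_pos (by rw [hdisc_act, hd, mul_zero]), act_fst, cls_sq_mul he]
      obtain ⟨lam, u, v, hl, huv, hm, hlm⟩ := rank1_rep h2 m h0 hd
      have hc : hcls ν (hlam (H4HeisAct p M m)) = hcls ν (hlam m) := by
        rw [hlm]
        conv_lhs => rw [hm]
        exact cls_lam_act M m.1 lam u v hl huv
      rw [hc]
    · have hd' : hdisc (H4HeisAct p M m) ≠ 0 := by
        rw [hdisc_act]; exact mul_ne_zero (pow_ne_zero 2 he) hd
      rw [if_neg hd', if_neg hd]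
      by_cases hs : IsSquare (hdisc m)
      · rw [if_pos hs, if_pos (by rw [hdisc_act]; exact (isSquare_sq_mul he _).mpr hs)]
        have hx : (H4HeisAct p M m).1 / hdisc (H4HeisAct p M m) = m.1 / hdisc m := by
          rw [act_fst, hdisc_act]
          field_simp
        rw [hx]
      · rw [if_neg (by rw [hdisc_act]; exact fun h => hs ((isSquare_sq_mul he _).mp h)), if_neg hs]
        have hx : 4 * ν * (H4HeisAct p M m).1 / hdisc (H4HeisAct p M m)
            = 4 * ν * m.1 / hdisc m := by
          rw [act_fst, hdisc_act]
          field_simp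
        rw [hx]

lemma exists_sol (hodd : Odd p) (A B C : ZMod p) (hA : A ≠ 0) (hB : B ≠ 0) :
    ∃ w y : ZMod p, A * w ^ 2 + B * y ^ 2 = C := by
  have hcard : Fintype.card (ZMod p) % 2 = 1 := by
    rw [ZMod.card]; exact Nat.odd_iff.mp hodd
  have hf : (Polynomial.C A * Polynomial.X ^ 2 : Polynomial (ZMod p)).degree = 2 :=
    Polynomial.degree_C_mul_X_pow 2 hA
  have hg : (Polynomial.C B * Polynomial.X ^ 2 - Polynomial.C C : Polynomial (ZMod p)).degree = 2 := by
    have h1 : (Polynomial.C C : Polynomial (ZMod p)).degree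
        < (Polynomial.C B * Polynomial.X ^ 2).degree := by
      rw [Polynomial.degree_C_mul_X_pow 2 hB]
      exact lt_of_le_of_lt Polynomial.degree_C_le (by norm_num)
    rw [Polynomial.degree_sub_eq_left_of_degree_lt h1]
    exact Polynomial.degree_C_mul_X_pow 2 hB
  obtain ⟨w, y, h⟩ := FiniteField.exists_root_sum_quadratic hf hg hcard
  refine ⟨w, y, ?_⟩
  simp only [Polynomial.eval_add, Polynomial.eval_sub, Polynomial.eval_mul, Polynomial.eval_pow,
    Polynomial.eval_C, Polynomial.eval_X] at h
  linear_combination h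

lemma exists_act_rank1 {ν : ZMod p} (hν : ¬IsSquare ν) (x lam u v : ZMod p)
    (hl : lam ≠ 0) (huv : u ≠ 0 ∨ v ≠ 0) :
    ∃ M, H4HeisAct p M (x, lam * u ^ 2, lam * v ^ 2, 2 * lam * u * v)
      = (hcls ν x, hcls ν lam, 0, 0) := by
  obtain ⟨s, hs, hlamr⟩ := cls_spec hν lam
  obtain ⟨t, ht, hx⟩ := cls_spec hν x
  by_cases hu : u = 0
  · have hv : v ≠ 0 := huv.resolve_left (not_not_intro hu)
    have hdet : (0 : ZMod p) * 0 - 1 / (s * v) * (v * (s / t)) ≠ 0 := by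
      have h1 : (0 : ZMod p) * 0 - 1 / (s * v) * (v * (s / t)) = -t⁻¹ := by
        field_simp
        ring
      rw [h1]
      exact neg_ne_zero.mpr (inv_ne_zero ht)
    refine ⟨glmk 0 (1 / (s * v)) (v * (s / t)) 0 hdet, ?_⟩
    rw [glmk_act]
    simp only [Prod.mk.injEq]
    refine ⟨?_, ?_, ?_, ?_⟩
    · conv_lhs => rw [hx]
      field_simp
      ring
    · conv_lhs => rw [hlamr]
      field_simp
      ring
    · rw [hu]; ring
    · rw [hu]; ring
  · have hdet : 1 / (s * u) * (u * (s / t)) - 0 * (-v * (s / t)) ≠ 0 := by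
      have h1 : 1 / (s * u) * (u * (s / t)) - 0 * (-v * (s / t)) = t⁻¹ := by
        field_simp
        ring
      rw [h1]
      exact inv_ne_zero ht
    refine ⟨glmk (1 / (s * u)) 0 (-v * (s / t)) (u * (s / t)) hdet, ?_⟩
    rw [glmk_act]
    simp only [Prod.mk.injEq]
    refine ⟨?_, ?_, ?_, ?_⟩
    · conv_lhs => rw [hx]
      field_simp
      ring
    · conv_lhs => rw [hlamr]
      field_simp
      ring
    · ring
    · field_simp; ring

lemma exists_act_split (h2 : (2 : ZMod p) ≠ 0) (x α β γ δ : ZMod p) (hδ : δ ≠ 0)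
    (hd : γ ^ 2 - 4 * α * β = δ * δ) :
    ∃ M, H4HeisAct p M (x, α, β, γ) = (x / (δ * δ), 0, 0, 1) := by
  by_cases hα : α = 0
  · have hγ : γ ≠ 0 := by
      intro h
      apply hδ
      exact mul_self_eq_zero.mp (by rw [← hd, hα, h]; ring)
    have hdet : (1 : ZMod p) * (1 / γ) - 0 * (-β / γ ^ 2) ≠ 0 := by
      have h1 : (1 : ZMod p) * (1 / γ) - 0 * (-β / γ ^ 2) = γ⁻¹ := by field_simp; ring
      rw [h1]; exact inv_ne_zero hγ
    refine ⟨glmk 1 0 (-β / γ ^ 2) (1 / γ) hdet, ?_⟩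
    rw [glmk_act]
    have hdd : δ * δ = γ ^ 2 := by rw [← hd, hα]; ring
    simp only [Prod.mk.injEq]
    refine ⟨?_, ?_, ?_, ?_⟩
    · rw [hdd]; field_simp; ring
    · rw [hα]; ring
    · rw [hα]; field_simp; ring
    · rw [hα]; field_simp; ring
  · set k := 1 / (4 * α * δ ^ 2) with hkdef
    have h4 : (4 : ZMod p) * α * δ ^ 2 ≠ 0 := by
      have h4' : (4 : ZMod p) = 2 * 2 := by norm_num
      exact mul_ne_zero (mul_ne_zero (by rw [h4']; exact mul_ne_zero h2 h2) hα)
        (pow_ne_zero 2 hδ)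
    have hk : 4 * α * δ ^ 2 * k = 1 := by rw [hkdef]; exact mul_one_div_cancel h4
    have hdet0 : (δ - γ) * (-(2 * α) * k) - 2 * α * (k * (δ + γ)) ≠ 0 := by
      intro h
      have h1 : 4 * α * δ ^ 2 * k = 0 := by linear_combination (-δ) * h
      rw [hk] at h1
      exact one_ne_zero h1
    refine ⟨glmk (δ - γ) (2 * α) (k * (δ + γ)) (-(2 * α) * k) hdet0, ?_⟩
    rw [glmk_act]
    simp only [Prod.mk.injEq]
    refine ⟨?_, ?_, ?_, ?_⟩
    · field_simp
      linear_combination ((4 * α * δ ^ 2 * k + 1) * x) * hk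
    · linear_combination (-α) * hd
    · linear_combination (-α * k ^ 2) * hd
    · linear_combination hk + (2 * α * k) * hd

lemma exists_act_nonsplit {ν : ZMod p} (h2 : (2 : ZMod p) ≠ 0) (hν : ¬IsSquare ν)
    (hodd : Odd p) (x α β γ : ZMod p) (hd0 : γ ^ 2 - 4 * α * β ≠ 0)
    (hnsq : ¬IsSquare (γ ^ 2 - 4 * α * β)) :
    ∃ M, H4HeisAct p M (x, α, β, γ)
      = (4 * ν * x / (γ ^ 2 - 4 * α * β), 1, -ν, 0) := by
  have hq : ∃ e1 e2 : ZMod p, α * e1 ^ 2 + β * e2 ^ 2 + γ * e1 * e2 = 1 := by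
    by_cases hα : α = 0
    · have hγ : γ ≠ 0 := by
        intro h; apply hd0; rw [hα, h]; ring
      have hβ : β ≠ 0 := fun h => hnsq ⟨γ, by rw [hα, h]; ring⟩
      obtain ⟨w, y, hwy⟩ := exists_sol hodd β (-(β * γ ^ 2)) 1 hβ
        (neg_ne_zero.mpr (mul_ne_zero hβ (pow_ne_zero 2 hγ)))
      refine ⟨2 * β * y, w - γ * y, ?_⟩
      rw [hα]
      linear_combination hwy
    · obtain ⟨w, y, hwy⟩ := exists_sol hodd α (α * (4 * α * β - γ ^ 2)) 1 hα
        (mul_ne_zero hα (fun h => hd0 (by linear_combination -h)))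
      refine ⟨w - γ * y, 2 * α * y, ?_⟩
      linear_combination hwy
  obtain ⟨e1, e2, hq⟩ := hq
  obtain ⟨r, hr⟩ := nsq_mul hν hnsq
  have hr0 : r ≠ 0 := by
    rintro rfl
    rw [mul_zero] at hr
    rcases mul_eq_zero.mp hr with h | h
    exacts [nsq_ne_zero hν h, hd0 h]
  set σ := r / (γ ^ 2 - 4 * α * β) with hσdef
  have hσ : σ ^ 2 * (γ ^ 2 - 4 * α * β) = ν := by
    rw [hσdef]; field_simp; linear_combination -hr
  have hσ0 : σ ≠ 0 := div_ne_zero hr0 hd0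
  have hdet : e1 * (σ * (2 * α * e1 + γ * e2)) - e2 * (σ * (-(2 * β * e2 + γ * e1)))
      = 2 * σ := by linear_combination (2 * σ) * hq
  refine ⟨glmk e1 e2 (σ * (-(2 * β * e2 + γ * e1))) (σ * (2 * α * e1 + γ * e2))
      (by rw [hdet]; exact mul_ne_zero h2 hσ0), ?_⟩
  rw [glmk_act]
  simp only [Prod.mk.injEq]
  refine ⟨?_, by linear_combination hq, ?_, by ring⟩
  · rw [hdet]
    field_simp
    linear_combination (4 * x) * hσ
  · linear_combination (-(σ ^ 2 * (γ ^ 2 - 4 * α * β))) * hq - hσ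

variable [NeZero p]

noncomputable def sRep (ν : ZMod p) : Finset (ZMod p × ZMod p × ZMod p × ZMod p) :=
  (({0, 1, ν} : Finset (ZMod p)) ×ˢ
      ({(0, 0, 0), (1, 0, 0), (ν, 0, 0)} : Finset (ZMod p × ZMod p × ZMod p)))
    ∪ ((Finset.univ : Finset (ZMod p)) ×ˢ
      ({(0, 0, 1), (1, -ν, 0)} : Finset (ZMod p × ZMod p × ZMod p)))

lemma mem_sRep_iff (ν : ZMod p) (w : ZMod p × ZMod p × ZMod p × ZMod p) :
    w ∈ sRep ν ↔
      ((w.1 = 0 ∨ w.1 = 1 ∨ w.1 = ν) ∧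
        (w.2 = (0, 0, 0) ∨ w.2 = (1, 0, 0) ∨ w.2 = (ν, 0, 0)))
      ∨ (w.2 = (0, 0, 1) ∨ w.2 = (1, -ν, 0)) := by
  simp [sRep, Finset.mem_union, Finset.mem_product, Finset.mem_insert, Finset.mem_singleton]

lemma card_sRep {ν : ZMod p} (h2 : (2 : ZMod p) ≠ 0) (hν : ¬IsSquare ν) :
    (sRep ν).card = 2 * p + 9 := by
  have hν0 : ν ≠ 0 := nsq_ne_zero hν
  have hν1 : ν ≠ 1 := fun h => hν (h ▸ IsSquare.one)
  have hdisj : Disjoint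
      (({0, 1, ν} : Finset (ZMod p)) ×ˢ
        ({(0, 0, 0), (1, 0, 0), (ν, 0, 0)} : Finset (ZMod p × ZMod p × ZMod p)))
      ((Finset.univ : Finset (ZMod p)) ×ˢ
        ({(0, 0, 1), (1, -ν, 0)} : Finset (ZMod p × ZMod p × ZMod p))) := by
    rw [Finset.disjoint_left]
    rintro ⟨w1, w2⟩ hA hB
    simp only [Finset.mem_product, Finset.mem_insert, Finset.mem_singleton] at hA hB
    obtain ⟨-, hA2⟩ := hA
    obtain ⟨-, hB2⟩ := hB
    rcases hB2 with h | h <;> rcases hA2 with h' | h' | h' <;>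
      rw [h] at h' <;> simp only [Prod.mk.injEq] at h'
    · exact one_ne_zero h'.2.2
    · exact one_ne_zero h'.2.2
    · exact one_ne_zero h'.2.2
    · exact one_ne_zero h'.1
    · exact (neg_ne_zero.mpr hν0) h'.2.1
    · exact hν1 h'.1.symm
  have c1 : ({0, 1, ν} : Finset (ZMod p)).card = 3 := by
    rw [Finset.card_insert_of_notMem (by simp [eq_comm, hν0, zero_ne_one]),
      Finset.card_insert_of_notMem (by simp [eq_comm]; exact hν1), Finset.card_singleton]
  have c2 : ({(0, 0, 0), (1, 0, 0), (ν, 0, 0)} : Finset (ZMod p × ZMod p × ZMod p)).card = 3 := by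
    rw [Finset.card_insert_of_notMem (by simp [Prod.ext_iff, eq_comm, hν0, zero_ne_one]),
      Finset.card_insert_of_notMem (by
        intro hmem
        rw [Finset.mem_singleton] at hmem
        exact hν1 (congrArg Prod.fst hmem).symm),
      Finset.card_singleton]
  have c3 : ({(0, 0, 1), (1, -ν, 0)} : Finset (ZMod p × ZMod p × ZMod p)).card = 2 := by
    rw [Finset.card_insert_of_notMem (by simp [Prod.ext_iff, zero_ne_one]),
      Finset.card_singleton]
  rw [sRep, Finset.card_union_of_disjoint hdisj, Finset.card_product, Finset.card_product,
    Finset.card_univ, ZMod.card, c1, c2, c3]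
  ring

lemma cf_fix {ν : ZMod p} (h2 : (2 : ZMod p) ≠ 0) (hν : ¬IsSquare ν)
    (w : ZMod p × ZMod p × ZMod p × ZMod p) (hw : w ∈ sRep ν) : hcf ν w = w := by
  have hν0 : ν ≠ 0 := nsq_ne_zero hν
  rw [mem_sRep_iff] at hw
  obtain ⟨w1, w2⟩ := w
  rcases hw with ⟨h1, hq⟩ | hq
  · have hcw : hcls ν w1 = w1 := by
      rcases h1 with rfl | rfl | rfl
      exacts [cls_zero ν, cls_one ν, cls_nu hν]
    rcases hq with h | h | h <;> rw [show w2 = _ from h]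
    · unfold hcf
      rw [if_pos rfl]
      dsimp only
      rw [hcw]
    · unfold hcf
      rw [if_neg (by simp), if_pos (by unfold hdisc; norm_num)]
      dsimp only
      have hl : hlam (w1, ((1 : ZMod p), (0 : ZMod p), (0 : ZMod p))) = 1 := by
        unfold hlam; simp
      rw [hl, cls_one, hcw]
    · unfold hcf
      rw [if_neg (by simp [hν0]), if_pos (by unfold hdisc; norm_num)]
      dsimp only
      have hl : hlam (w1, (ν, (0 : ZMod p), (0 : ZMod p))) = ν := by
        unfold hlam; simp [hν0]
      rw [hl, cls_nu hν, hcw]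
  · rcases hq with h | h <;> rw [show w2 = _ from h]
    · unfold hcf
      rw [if_neg (by simp), if_neg (by unfold hdisc; norm_num),
        if_pos (by unfold hdisc; norm_num)]
      dsimp only
      have hdv : hdisc (w1, ((0 : ZMod p), (0 : ZMod p), (1 : ZMod p))) = 1 := by
        unfold hdisc; norm_num
      rw [hdv, div_one]
    · have h4 : (4 : ZMod p) ≠ 0 := by
        have h4' : (4 : ZMod p) = 2 * 2 := by norm_num
        rw [h4']; exact mul_ne_zero h2 h2
      have hdv : hdisc (w1, ((1 : ZMod p), -ν, (0 : ZMod p))) = 4 * ν := by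
        unfold hdisc; ring
      have hd0 : hdisc (w1, ((1 : ZMod p), -ν, (0 : ZMod p))) ≠ 0 := by
        rw [hdv]; exact mul_ne_zero h4 hν0
      have hns : ¬IsSquare (hdisc (w1, ((1 : ZMod p), -ν, (0 : ZMod p)))) := by
        rw [hdv]
        rintro ⟨r, hr⟩
        exact hν ⟨r / 2, by field_simp; linear_combination hr⟩
      unfold hcf
      rw [if_neg (by simp [hν0]), if_neg hd0, if_neg hns]
      dsimp only
      rw [hdv, mul_div_cancel_left₀ w1 (mul_ne_zero h4 hν0)]

lemma cf_mem {ν : ZMod p} (m : ZMod p × ZMod p × ZMod p × ZMod p) :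
    hcf ν m ∈ sRep ν := by
  rw [mem_sRep_iff]
  unfold hcf
  by_cases h0 : m.2 = (0, 0, 0)
  · rw [if_pos h0]; exact Or.inl ⟨cls_mem ν m.1, Or.inl rfl⟩
  rw [if_neg h0]
  by_cases hd : hdisc m = 0
  · rw [if_pos hd]
    left
    refine ⟨cls_mem ν m.1, ?_⟩
    rcases cls_mem ν (hlam m) with h | h | h <;> rw [h]
    · exact Or.inl rfl
    · exact Or.inr (Or.inl rfl)
    · exact Or.inr (Or.inr rfl)
  rw [if_neg hd]
  by_cases hs : IsSquare (hdisc m)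
  · rw [if_pos hs]; exact Or.inr (Or.inl rfl)
  · rw [if_neg hs]; exact Or.inr (Or.inr rfl)

lemma exists_act {ν : ZMod p} (h2 : (2 : ZMod p) ≠ 0) (hν : ¬IsSquare ν) (hodd : Odd p)
    (m : ZMod p × ZMod p × ZMod p × ZMod p) :
    ∃ M, H4HeisAct p M m = hcf ν m := by
  obtain ⟨x, α, β, γ⟩ := m
  by_cases h0 : ((x, α, β, γ) : ZMod p × ZMod p × ZMod p × ZMod p).2 = (0, 0, 0)
  · have h0' := h0
    simp only [Prod.mk.injEq] at h0'
    obtain ⟨rfl, rfl, rfl⟩ := h0'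
    obtain ⟨t, ht, hx⟩ := cls_spec hν x
    have hdet : t⁻¹ * 1 - 0 * 0 ≠ (0 : ZMod p) := by
      simpa using inv_ne_zero ht
    refine ⟨glmk t⁻¹ 0 0 1 hdet, ?_⟩
    rw [glmk_act]
    unfold hcf
    rw [if_pos rfl]
    dsimp only
    simp only [Prod.mk.injEq]
    refine ⟨?_, by ring, by ring, by ring⟩
    conv_lhs => rw [hx]
    field_simp
    ring
  · unfold hcf
    rw [if_neg h0]
    by_cases hd : hdisc (x, α, β, γ) = 0
    · rw [if_pos hd]
      obtain ⟨lam, u, v, hl, huv, hm, hlm⟩ := rank1_rep h2 _ h0 hd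
      dsimp only at hm
      obtain ⟨M, hM⟩ := exists_act_rank1 hν x lam u v hl huv
      refine ⟨M, ?_⟩
      dsimp only
      rw [hlm]
      conv_lhs => rw [hm]
      rw [hM]
    · rw [if_neg hd]
      have hdval : hdisc (x, α, β, γ) = γ ^ 2 - 4 * α * β := rfl
      by_cases hs : IsSquare (hdisc (x, α, β, γ))
      · rw [if_pos hs]
        obtain ⟨r, hr⟩ := hs
        have hr0 : r ≠ 0 := by rintro rfl; rw [mul_zero] at hr; exact hd hr
        obtain ⟨M, hM⟩ := exists_act_split h2 x α β γ r hr0 (by rw [← hdval]; exact hr)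
        refine ⟨M, ?_⟩
        dsimp only
        rw [hr]
        exact hM
      · rw [if_neg hs]
        obtain ⟨M, hM⟩ := exists_act_nonsplit h2 hν hodd x α β γ
          (by rwa [hdval] at hd) (by rwa [hdval] at hs)
        refine ⟨M, ?_⟩
        dsimp only
        rw [hdval]
        exact hM

end H4Aux

/-- Let `p` be an odd prime.  The action of `GL(2,p)` on
`(Z/p)⁴ = ⟨χ, z₁², z₂², z₁z₂⟩` described above has exactly `2p + 9` orbits. -/
theorem H4_Heisenberg_orbit_count (p : ℕ) (hp : p.Prime) (hodd : Odd p) :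
    ∃ s : Finset (ZMod p × ZMod p × ZMod p × ZMod p), s.card = 2 * p + 9 ∧
      ∀ m : ZMod p × ZMod p × ZMod p × ZMod p, ∃! w, w ∈ s ∧
        ∃ M : Matrix.GeneralLinearGroup (Fin 2) (ZMod p), w = H4HeisAct p M m := by
  haveI : Fact p.Prime := ⟨hp⟩
  haveI : NeZero p := ⟨hp.ne_zero⟩
  have hp2 : p ≠ 2 := by
    rintro rfl
    rw [Nat.odd_iff] at hodd
    norm_num at hodd
  have h2 : (2 : ZMod p) ≠ 0 := by
    intro h
    have h' : ((2 : ℕ) : ZMod p) = 0 := by exact_mod_cast h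
    rw [ZMod.natCast_eq_zero_iff] at h'
    exact hp2 ((Nat.prime_dvd_prime_iff_eq hp Nat.prime_two).mp h')
  obtain ⟨ν, hν⟩ := FiniteField.exists_nonsquare (F := ZMod p)
    (by rw [ZMod.ringChar_zmod_n]; exact hp2)
  refine ⟨H4Aux.sRep ν, H4Aux.card_sRep h2 hν, fun m => ?_⟩
  obtain ⟨M0, hM0⟩ := H4Aux.exists_act h2 hν hodd m
  refine ⟨H4Aux.hcf ν m, ⟨H4Aux.cf_mem m, M0, hM0.symm⟩, ?_⟩
  rintro w ⟨hw, M, rfl⟩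
  rw [← H4Aux.cf_fix h2 hν _ hw]
  exact H4Aux.cf_act h2 M m
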